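/- If a finite point set P ⊂ [0,1)^d with N points is given and j ∈ ℕ₀^d, m ∈ D_j are such that no point of P lies in the interior of the dyadic box I_{j,m}, then the Haar coefficient of the discrepancy function satisfies |μ_{j,m}(D_P)| = N·2^{-2j₁-⋯-2j_d-2d}. -/

import Mathlib

open MeasureTheory

/-- The L∞-normalized Haar function `h_{j,m}` on `[0,1)`. -/
noncomputable def haar1 (j m : ℕ) (x : ℝ) : ℝ :=
  if (m : ℝ) / 2 ^ j ≤ x ∧ x < ((m : ℝ) + 1 / 2) / 2 ^ j then 1
  else if ((m : ℝ) + 1 / 2) / 2 ^ j ≤ x ∧ x < ((m : ℝ) + 1) / 2 ^ j then -1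
  else 0

/-- The discrepancy function of an `N`-point set `P ⊂ [0,1)^d`. -/
noncomputable def discrepancyD (d N : ℕ) (P : Finset (Fin d → ℝ)) (x : Fin d → ℝ) : ℝ :=
  (∑ z ∈ P, (Set.univ.pi (fun i => Set.Ioo (z i) 1)).indicator (fun _ => (1 : ℝ)) x) -
    N * ∏ i, x i

/-! The integrand factorises over the coordinates: `1_{C_z}(x) = ∏ᵢ 1_{(zᵢ,1)}(xᵢ)`, and
`x₁⋯x_d` and the Haar function are products too, so by Fubini every term of the Haar coefficient
is a product of one-dimensional integrals over `[0,1)`. If `z` avoids the open box, some `zᵢ`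
avoids the interval `(a, b)` carrying `h_{jᵢ,mᵢ}`; then `1_{(zᵢ,1)}` is constant on `(a, b)` and
that factor vanishes because `h` has mean zero. Only the volume term survives, and
`∫₀¹ t h_{j,m}(t) dt = -2^{-2j-2}`. -/

open Set

theorem zpow_sum₀ {ι G₀ : Type*} [CommGroupWithZero G₀] {a : G₀} (ha : a ≠ 0) (s : Finset ι)
    (f : ι → ℤ) : a ^ (∑ i ∈ s, f i) = ∏ i ∈ s, a ^ f i := by
  induction s using Finset.cons_induction with
  | empty => simp
  | cons i s _ ih => rw [Finset.sum_cons, Finset.prod_cons, zpow_add₀ ha, ih]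

theorem indicator_univ_pi_one_apply {ι M : Type*} [Fintype ι] [CommMonoidWithZero M]
    {α : ι → Type*} (s : ∀ i, Set (α i)) (x : ∀ i, α i) :
    (univ.pi s).indicator (fun _ => (1 : M)) x = ∏ i, (s i).indicator (fun _ => 1) (x i) := by
  by_cases h : x ∈ univ.pi s
  · rw [indicator_of_mem h]
    exact (Finset.prod_eq_one fun i _ => indicator_of_mem (h i (mem_univ i)) _).symm
  · obtain ⟨i, hi⟩ : ∃ i, x i ∉ s i := by simpa [mem_univ_pi] using h
    rw [indicator_of_notMem h]
    exact (Finset.prod_eq_zero (Finset.mem_univ i) (indicator_of_notMem hi _)).symm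

theorem haar_mid_mem_Icc (j m : ℕ) :
    ((m : ℝ) + 1 / 2) / 2 ^ j ∈ Icc ((m : ℝ) / 2 ^ j) (((m : ℝ) + 1) / 2 ^ j) :=
  ⟨by gcongr; norm_num, by gcongr; norm_num⟩

section Haar1

variable {j m : ℕ}

theorem mul_haar1_eq (g : ℝ → ℝ) (t : ℝ) :
    g t * haar1 j m t = (Ico ((m : ℝ) / 2 ^ j) (((m : ℝ) + 1 / 2) / 2 ^ j)).indicator g t
      - (Ico (((m : ℝ) + 1 / 2) / 2 ^ j) (((m : ℝ) + 1) / 2 ^ j)).indicator g t := by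
  simp only [haar1, indicator_apply, mem_Ico]
  split_ifs with h₁ h₂
  · exact absurd h₂.1 (not_le.mpr h₁.2)
  all_goals ring

theorem haar_right_le_one (hm : m < 2 ^ j) : ((m : ℝ) + 1) / 2 ^ j ≤ 1 :=
  (div_le_one (by positivity)).mpr (by exact_mod_cast hm)

theorem integrable_mul_haar1 {μ : Measure ℝ} {g : ℝ → ℝ}
    (hg : IntegrableOn g (Ico ((m : ℝ) / 2 ^ j) (((m : ℝ) + 1) / 2 ^ j)) μ) :
    Integrable (fun t => g t * haar1 j m t) μ := by
  simp_rw [mul_haar1_eq]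
  exact ((hg.mono_set (Ico_subset_Ico_right (haar_mid_mem_Icc j m).2)).integrable_indicator
      measurableSet_Ico).sub
    ((hg.mono_set (Ico_subset_Ico_left (haar_mid_mem_Icc j m).1)).integrable_indicator
      measurableSet_Ico)

-- Open halves, so that `1_{(z,1)}` is constant on each of them when `z ∉ (a, b)`, even if `z = a`.
theorem setIntegral_Ico_zero_one_mul_haar1 (hm : m < 2 ^ j) {g : ℝ → ℝ}
    (hg : IntegrableOn g (Ico ((m : ℝ) / 2 ^ j) (((m : ℝ) + 1) / 2 ^ j))) :
    ∫ t in Ico 0 1, g t * haar1 j m t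
      = (∫ t in Ioo ((m : ℝ) / 2 ^ j) (((m : ℝ) + 1 / 2) / 2 ^ j), g t)
        - ∫ t in Ioo (((m : ℝ) + 1 / 2) / 2 ^ j) (((m : ℝ) + 1) / 2 ^ j), g t := by
  have hleft : Ico ((m : ℝ) / 2 ^ j) (((m : ℝ) + 1 / 2) / 2 ^ j)
      ⊆ Ico ((m : ℝ) / 2 ^ j) (((m : ℝ) + 1) / 2 ^ j) :=
    Ico_subset_Ico le_rfl (haar_mid_mem_Icc j m).2
  have hright : Ico (((m : ℝ) + 1 / 2) / 2 ^ j) (((m : ℝ) + 1) / 2 ^ j)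
      ⊆ Ico ((m : ℝ) / 2 ^ j) (((m : ℝ) + 1) / 2 ^ j) :=
    Ico_subset_Ico (haar_mid_mem_Icc j m).1 le_rfl
  have hsub : Ico ((m : ℝ) / 2 ^ j) (((m : ℝ) + 1) / 2 ^ j) ⊆ Ico 0 1 :=
    Ico_subset_Ico (by positivity) (haar_right_le_one hm)
  simp_rw [mul_haar1_eq]
  rw [integral_sub ((hg.mono_set hleft).restrict.integrable_indicator measurableSet_Ico)
      ((hg.mono_set hright).restrict.integrable_indicator measurableSet_Ico),
    setIntegral_indicator measurableSet_Ico, setIntegral_indicator measurableSet_Ico,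
    inter_eq_right.mpr (hleft.trans hsub), inter_eq_right.mpr (hright.trans hsub),
    integral_Ico_eq_integral_Ioo, integral_Ico_eq_integral_Ioo]

theorem setIntegral_Ico_zero_one_indicator_mul_haar1 (hm : m < 2 ^ j) {z : ℝ}
    (hz : z ≤ (m : ℝ) / 2 ^ j ∨ ((m : ℝ) + 1) / 2 ^ j ≤ z) :
    ∫ t in Ico 0 1, (Ioo z 1).indicator (fun _ => (1 : ℝ)) t * haar1 j m t = 0 := by
  rw [setIntegral_Ico_zero_one_mul_haar1 hm
    ((integrableOn_const measure_Ico_lt_top.ne).indicator measurableSet_Ioo)]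
  obtain ⟨hac, hcb⟩ := haar_mid_mem_Icc j m
  rcases hz with hz | hz
  · have hone : EqOn ((Ioo z 1).indicator fun _ => (1 : ℝ)) (fun _ => 1)
        (Ioo ((m : ℝ) / 2 ^ j) (((m : ℝ) + 1) / 2 ^ j)) := fun t ht =>
      indicator_of_mem
        (show t ∈ Ioo z 1 from ⟨hz.trans_lt ht.1, ht.2.trans_le (haar_right_le_one hm)⟩) _
    rw [setIntegral_congr_fun measurableSet_Ioo (hone.mono (Ioo_subset_Ioo le_rfl hcb)),
      setIntegral_congr_fun measurableSet_Ioo (hone.mono (Ioo_subset_Ioo hac le_rfl)),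
      setIntegral_const, setIntegral_const, Real.volume_real_Ioo_of_le hac,
      Real.volume_real_Ioo_of_le hcb]
    ring
  · have hzero : ∀ t ∈ Ioo ((m : ℝ) / 2 ^ j) (((m : ℝ) + 1) / 2 ^ j),
        (Ioo z 1).indicator (fun _ => (1 : ℝ)) t = 0 := fun t ht =>
      indicator_of_notMem (fun h => (ht.2.trans_le hz).not_gt h.1) _
    rw [setIntegral_eq_zero_of_forall_eq_zero fun t ht => hzero t (Ioo_subset_Ioo le_rfl hcb ht),
      setIntegral_eq_zero_of_forall_eq_zero fun t ht => hzero t (Ioo_subset_Ioo hac le_rfl ht),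
      sub_zero]

theorem setIntegral_Ico_zero_one_id_mul_haar1 (hm : m < 2 ^ j) :
    ∫ t in Ico 0 1, t * haar1 j m t = -(2 : ℝ) ^ (-2 * (j : ℤ) - 2) := by
  rw [setIntegral_Ico_zero_one_mul_haar1 (g := fun t => t) hm
      (continuous_id.integrableOn_Icc.mono_set Ico_subset_Icc_self),
    ← integral_Ioc_eq_integral_Ioo, ← integral_Ioc_eq_integral_Ioo,
    ← intervalIntegral.integral_of_le (haar_mid_mem_Icc j m).1,
    ← intervalIntegral.integral_of_le (haar_mid_mem_Icc j m).2,
    integral_id, integral_id,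
    show -2 * (j : ℤ) - 2 = -((2 * j + 2 : ℕ) : ℤ) by push_cast; ring, zpow_neg, zpow_natCast,
    pow_add, pow_mul']
  field_simp
  ring

end Haar1

theorem integrable_indicator_Ioo_mul_haar1 (j m : ℕ) (z : ℝ) :
    Integrable (fun t => (Ioo z 1).indicator (fun _ => (1 : ℝ)) t * haar1 j m t)
      (volume.restrict (Ico 0 1)) :=
  integrable_mul_haar1 ((integrableOn_const (by finiteness)).indicator measurableSet_Ioo)

theorem integrable_id_mul_haar1 (j m : ℕ) :
    Integrable (fun t => t * haar1 j m t) (volume.restrict (Ico 0 1)) :=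
  integrable_mul_haar1 (continuous_id.integrableOn_Icc.mono_set Ico_subset_Icc_self).restrict

theorem discrepancyD_mul_prod_haar1 (d N : ℕ) (P : Finset (Fin d → ℝ)) (j m : Fin d → ℕ)
    (x : Fin d → ℝ) :
    discrepancyD d N P x * ∏ i, haar1 (j i) (m i) (x i)
      = ∑ z ∈ P, ∏ i, (Ioo (z i) 1).indicator (fun _ => (1 : ℝ)) (x i) * haar1 (j i) (m i) (x i)
        - N * ∏ i, x i * haar1 (j i) (m i) (x i) := by
  simp only [discrepancyD, indicator_univ_pi_one_apply, sub_mul, Finset.sum_mul,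
    ← Finset.prod_mul_distrib, mul_assoc]

theorem setIntegral_discrepancyD_mul_prod_haar1 (d N : ℕ) (P : Finset (Fin d → ℝ))
    (j m : Fin d → ℕ) :
    ∫ x in univ.pi (fun _ : Fin d => Ico (0 : ℝ) 1),
        discrepancyD d N P x * ∏ i, haar1 (j i) (m i) (x i)
      = ∑ z ∈ P, ∏ i, (∫ t in Ico 0 1,
          (Ioo (z i) 1).indicator (fun _ => (1 : ℝ)) t * haar1 (j i) (m i) t)
        - N * ∏ i, ∫ t in Ico 0 1, t * haar1 (j i) (m i) t := by
  have hcount (z : Fin d → ℝ) := Integrable.fintype_prod fun i =>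
    integrable_indicator_Ioo_mul_haar1 (j i) (m i) (z i)
  rw [volume_pi, Measure.restrict_pi_pi]
  simp_rw [discrepancyD_mul_prod_haar1]
  rw [integral_sub (integrable_finsetSum _ fun z _ => hcount z)
      ((Integrable.fintype_prod fun i => integrable_id_mul_haar1 (j i) (m i)).const_mul _),
    integral_finsetSum _ fun z _ => hcount z, integral_const_mul,
    integral_fintype_prod_eq_prod (fun i t => t * haar1 (j i) (m i) t)]
  congr 1
  exact Finset.sum_congr rfl fun z _ => integral_fintype_prod_eq_prod
    (fun i t => (Ioo (z i) 1).indicator (fun _ => (1 : ℝ)) t * haar1 (j i) (m i) t)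

theorem haar_coefficient_discrepancy_empty_box_d_general (d N : ℕ) (P : Finset (Fin d → ℝ))
    (j m : Fin d → ℕ) (hm : ∀ i, m i < 2 ^ j i)
    (hempty : ∀ z ∈ P, z ∉ Set.univ.pi
      (fun i => Set.Ioo ((m i : ℝ) / 2 ^ j i) (((m i : ℝ) + 1) / 2 ^ j i))) :
    |∫ x in Set.univ.pi (fun _ : Fin d => Set.Ico (0 : ℝ) 1),
        discrepancyD d N P x * ∏ i, haar1 (j i) (m i) (x i)|
      = N * (2 : ℝ) ^ (-(2 : ℤ) * ∑ i, (j i : ℤ) - 2 * d) := by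
  have hpoint : ∀ z ∈ P, ∏ i, ∫ t in Ico 0 1,
      (Ioo (z i) 1).indicator (fun _ => (1 : ℝ)) t * haar1 (j i) (m i) t = 0 := by
    intro z hz
    obtain ⟨i, hi⟩ : ∃ i, ¬((m i : ℝ) / 2 ^ j i < z i ∧ z i < ((m i : ℝ) + 1) / 2 ^ j i) := by
      simpa [mem_univ_pi] using hempty z hz
    rw [not_and_or, not_lt, not_lt] at hi
    exact Finset.prod_eq_zero (Finset.mem_univ i)
      (setIntegral_Ico_zero_one_indicator_mul_haar1 (hm i) hi)
  rw [setIntegral_discrepancyD_mul_prod_haar1, Finset.sum_eq_zero hpoint]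
  simp_rw [setIntegral_Ico_zero_one_id_mul_haar1 (hm _)]
  rw [zero_sub, abs_neg, abs_mul, Nat.abs_cast, Finset.abs_prod]
  simp_rw [abs_neg, abs_of_pos (zpow_pos (two_pos (α := ℝ)) _)]
  rw [← zpow_sum₀ two_ne_zero, Finset.sum_sub_distrib, ← Finset.mul_sum]
  simp [mul_comm]

theorem haar_coefficient_discrepancy_empty_box_d (d N : ℕ) (P : Finset (Fin d → ℝ))
    (hP : ↑P ⊆ Set.univ.pi (fun _ : Fin d => Set.Ico (0 : ℝ) 1)) (hcard : P.card = N)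
    (j m : Fin d → ℕ) (hm : ∀ i, m i < 2 ^ j i)
    (hempty : ∀ z ∈ P, z ∉ Set.univ.pi
      (fun i => Set.Ioo ((m i : ℝ) / 2 ^ j i) (((m i : ℝ) + 1) / 2 ^ j i))) :
    |∫ x in Set.univ.pi (fun _ : Fin d => Set.Ico (0 : ℝ) 1),
        discrepancyD d N P x * ∏ i, haar1 (j i) (m i) (x i)|
      = N * (2 : ℝ) ^ (-(2 : ℤ) * ∑ i, (j i : ℤ) - 2 * d) :=
  haar_coefficient_discrepancy_empty_box_d_general d N P j m hm hempty
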